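/- s(K) ≥ 3 (i.e., there exists an m×3 integer matrix satisfying condition (A) for K) if and only if condition (S3) holds: N(K) contains one of the following configurations of pairwise distinct elements: (1) τ₁,…,τ₇ with τ₁∩τ₂∩τ₄ = ∅, τ₁∩τ₃∩τ₅ = ∅, τ₁∩τ₆∩τ₇ = ∅, τ₂∩τ₃∩τ₆ = ∅, τ₂∩τ₅∩τ₇ = ∅, τ₃∩τ₄∩τ₇ = ∅, τ₄∩τ₅∩τ₆ = ∅; (2) τ₁,…,τ₆ with τ₁∩τ₃ = ∅, τ₁∩τ₂∩τ₄ = ∅, τ₁∩τ₂∩τ₅ = ∅, τ₁∩τ₄∩τ₆ = ∅, τ₁∩τ₅∩τ₆ = ∅, τ₂∩τ₃∩τ₆ = ∅, τ₃∩τ₄∩τ₅ = ∅; (3) τ₁,…,τ₅ with τ₁∩τ₂ = ∅, τ₁∩τ₅ = ∅, τ₁∩τ₃∩τ₄ = ∅, τ₂∩τ₃∩τ₅ = ∅, τ₂∩τ₄∩τ₅ = ∅; (4) τ₁,…,τ₄ with τ₁ ∩ (τ₂ ∪ τ₃ ∪ τ₄) = ∅ and τ₂∩τ₃∩τ₄ =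 ∅; (5) τ₁, τ₂, τ₃ with τ₁∩τ₂ = τ₁∩τ₃ = τ₂∩τ₃ = ∅. -/

import Mathlib

/-!
Reduce an integer matrix `S` mod 2. The seven nonzero functionals on `𝔽₂³` are the points of the
Fano plane, and the three functionals on a line sum to zero. If `S` satisfies (A), the rows on
which a functional is odd do not form a simplex (the other rows, all killed by the functional,
would generate `ℤ³`), and no row is odd for all three functionals of a line. Minimal
non-simplices inside these sets form a Fano labelling: seven minimal non-simplices such that the
three on any line have empty intersection. Up to a collineation, the coincidences among the labels
follow one of a few patterns, and each pattern exhibits one of the configurations of (S3).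

Conversely, each configuration of (S3) spreads over the Fano plane as a labelling by
non-simplices. For a vertex `i`, the points whose label contains `i` contain no line, so they lie
in an affine chart `{p | p ⬝ d = 1}`; the row of `i` is the `0/1` lift of `d`. For a simplex `σ`
every label leaves `σ`, so the rows outside `σ` meet every chart, hence contain three
non-collinear points, and the `0/1` lifts of three non-collinear points form a unimodular matrix.
-/

/-- `K` is an abstract simplicial complex on the vertex set `[m]`:
it contains the empty set and is closed under taking subsets. -/
def IsSimplicialComplex (m : ℕ) (K : Set (Finset (Fin m))) : Prop :=
  ∅ ∈ K ∧ ∀ σ ∈ K, ∀ τ ⊆ σ, τ ∈ K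

/-- `ω` is a minimal non-simplex of `K`: `ω ∉ K` but every proper subset of `ω` is in `K`. -/
def MinimalNonSimplex (m : ℕ) (K : Set (Finset (Fin m))) (ω : Finset (Fin m)) : Prop :=
  ω ∉ K ∧ ∀ τ ⊂ ω, τ ∈ K

/-- Condition (A): for every simplex `σ ∈ K` the rows `{Sⁱ : i ∉ σ}`
generate `ℤᵏ` as an abelian group. -/
def CondA (m k : ℕ) (K : Set (Finset (Fin m))) (S : Matrix (Fin m) (Fin k) ℤ) : Prop :=
  ∀ σ ∈ K, Submodule.span ℤ ((fun i => S i) '' {i : Fin m | i ∉ σ}) = ⊤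

/-- Condition (A2): for every simplex `σ ∈ K` the rows `{Sⁱ : i ∉ σ}` span `𝔽₂ᵏ`. -/
def CondA2 (m k : ℕ) (K : Set (Finset (Fin m))) (S : Matrix (Fin m) (Fin k) (ZMod 2)) : Prop :=
  ∀ σ ∈ K, Submodule.span (ZMod 2) ((fun i => S i) '' {i : Fin m | i ∉ σ}) = ⊤

/-- Condition (S2): `N(K)` contains two disjoint elements, or three pairwise distinct
elements with empty common intersection. -/
def CondS2 (m : ℕ) (K : Set (Finset (Fin m))) : Prop :=
  (∃ τ₁ τ₂ τ₃ : Finset (Fin m), MinimalNonSimplex m K τ₁ ∧ MinimalNonSimplex m K τ₂ ∧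
    MinimalNonSimplex m K τ₃ ∧ τ₁ ≠ τ₂ ∧ τ₁ ≠ τ₃ ∧ τ₂ ≠ τ₃ ∧ τ₁ ∩ τ₂ ∩ τ₃ = ∅) ∨
  (∃ τ₁ τ₂ : Finset (Fin m), MinimalNonSimplex m K τ₁ ∧ MinimalNonSimplex m K τ₂ ∧
    τ₁ ≠ τ₂ ∧ τ₁ ∩ τ₂ = ∅)

/-- Condition (S3): `N(K)` contains one of five configurations of pairwise distinct
elements described in Proposition (S3). -/
def CondS3 (m : ℕ) (K : Set (Finset (Fin m))) : Prop :=
  (∃ τ₁ τ₂ τ₃ τ₄ τ₅ τ₆ τ₇ : Finset (Fin m),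
    (∀ τ ∈ [τ₁, τ₂, τ₃, τ₄, τ₅, τ₆, τ₇], MinimalNonSimplex m K τ) ∧
    [τ₁, τ₂, τ₃, τ₄, τ₅, τ₆, τ₇].Pairwise (· ≠ ·) ∧
    τ₁ ∩ τ₂ ∩ τ₄ = ∅ ∧ τ₁ ∩ τ₃ ∩ τ₅ = ∅ ∧ τ₁ ∩ τ₆ ∩ τ₇ = ∅ ∧
    τ₂ ∩ τ₃ ∩ τ₆ = ∅ ∧ τ₂ ∩ τ₅ ∩ τ₇ = ∅ ∧ τ₃ ∩ τ₄ ∩ τ₇ = ∅ ∧ τ₄ ∩ τ₅ ∩ τ₆ = ∅) ∨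
  (∃ τ₁ τ₂ τ₃ τ₄ τ₅ τ₆ : Finset (Fin m),
    (∀ τ ∈ [τ₁, τ₂, τ₃, τ₄, τ₅, τ₆], MinimalNonSimplex m K τ) ∧
    [τ₁, τ₂, τ₃, τ₄, τ₅, τ₆].Pairwise (· ≠ ·) ∧
    τ₁ ∩ τ₃ = ∅ ∧ τ₁ ∩ τ₂ ∩ τ₄ = ∅ ∧ τ₁ ∩ τ₂ ∩ τ₅ = ∅ ∧
    τ₁ ∩ τ₄ ∩ τ₆ = ∅ ∧ τ₁ ∩ τ₅ ∩ τ₆ = ∅ ∧ τ₂ ∩ τ₃ ∩ τ₆ = ∅ ∧ τ₃ ∩ τ₄ ∩ τ₅ = ∅) ∨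
  (∃ τ₁ τ₂ τ₃ τ₄ τ₅ : Finset (Fin m),
    (∀ τ ∈ [τ₁, τ₂, τ₃, τ₄, τ₅], MinimalNonSimplex m K τ) ∧
    [τ₁, τ₂, τ₃, τ₄, τ₅].Pairwise (· ≠ ·) ∧
    τ₁ ∩ τ₂ = ∅ ∧ τ₁ ∩ τ₅ = ∅ ∧ τ₁ ∩ τ₃ ∩ τ₄ = ∅ ∧
    τ₂ ∩ τ₃ ∩ τ₅ = ∅ ∧ τ₂ ∩ τ₄ ∩ τ₅ = ∅) ∨
  (∃ τ₁ τ₂ τ₃ τ₄ : Finset (Fin m),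
    (∀ τ ∈ [τ₁, τ₂, τ₃, τ₄], MinimalNonSimplex m K τ) ∧
    [τ₁, τ₂, τ₃, τ₄].Pairwise (· ≠ ·) ∧
    τ₁ ∩ (τ₂ ∪ τ₃ ∪ τ₄) = ∅ ∧ τ₂ ∩ τ₃ ∩ τ₄ = ∅) ∨
  (∃ τ₁ τ₂ τ₃ : Finset (Fin m),
    (∀ τ ∈ [τ₁, τ₂, τ₃], MinimalNonSimplex m K τ) ∧
    [τ₁, τ₂, τ₃].Pairwise (· ≠ ·) ∧
    τ₁ ∩ τ₂ = ∅ ∧ τ₁ ∩ τ₃ = ∅ ∧ τ₂ ∩ τ₃ = ∅)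

namespace Fano

/- The point `p : Fin 7` of the Fano plane is the nonzero vector of `𝔽₂³` whose coordinates are
the binary digits of `p + 1`; adding vectors is `xor` of these codes. -/
def intVec (p : Fin 7) : Fin 3 → ℤ := fun j => if (p.val + 1).testBit j then 1 else 0

def vec (p : Fin 7) : Fin 3 → ZMod 2 := fun j => (intVec p j : ZMod 2)

def third (p q : Fin 7) : Fin 7 :=
  ⟨(((p.val + 1) ^^^ (q.val + 1)) + 6) % 7, Nat.mod_lt _ (by norm_num)⟩

def IsLine (a b c : Fin 7) : Prop := a ≠ b ∧ third a b = c

instance (a b c : Fin 7) : Decidable (IsLine a b c) := inferInstanceAs (Decidable (_ ∧ _))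

def Noncollinear (a b c : Fin 7) : Prop := a ≠ b ∧ c ≠ a ∧ c ≠ b ∧ c ≠ third a b

instance (a b c : Fin 7) : Decidable (Noncollinear a b c) := inferInstanceAs (Decidable (_ ∧ _))

theorem IsLine.vec_add {a b c : Fin 7} : IsLine a b c → vec a + vec b = vec c := by
  revert a b c; decide

theorem exists_vec_dotProduct_eq_one (p : Fin 7) : ∃ q, vec p ⬝ᵥ vec q = 1 := by
  revert p; decide

set_option maxRecDepth 10000 in
theorem exists_forall_vec_dotProduct_eq_one (T : Finset (Fin 7))
    (hT : ∀ a ∈ T, ∀ b ∈ T, ∀ c ∈ T, ¬ IsLine a b c) : ∃ d, ∀ p ∈ T, vec p ⬝ᵥ vec d = 1 := by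
  revert T; decide

set_option maxRecDepth 10000 in
theorem exists_noncollinear_of_forall_exists_dotProduct_eq_one (D : Finset (Fin 7))
    (hD : ∀ p, ∃ d ∈ D, vec p ⬝ᵥ vec d = 1) :
    ∃ a ∈ D, ∃ b ∈ D, ∃ c ∈ D, Noncollinear a b c := by
  revert D; decide

theorem isUnit_det_intVec {a b c : Fin 7} (h : Noncollinear a b c) :
    IsUnit (Matrix.of ![intVec a, intVec b, intVec c]).det := by
  rw [Int.isUnit_iff, Matrix.det_fin_three]
  revert a b c; decide

theorem third_ne_left {a b : Fin 7} (h : a ≠ b) : third a b ≠ a := by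
  revert a b; decide

theorem third_third_left {a b : Fin 7} (h : a ≠ b) : third (third a b) a = b := by
  revert a b; decide

theorem exists_noncollinear {a b : Fin 7} (h : a ≠ b) : ∃ c, Noncollinear a b c := by
  revert a b; decide

theorem lines_meet {x y p q : Fin 7} (hxy : x ≠ y) (hpq : p ≠ q) (hpx : p ≠ x) (hpy : p ≠ y)
    (hqx : q ≠ x) (hqy : q ≠ y) :
    third x y = third p q ∨ third x y = p ∨ third x y = q ∨ third p q = x ∨ third p q = y := by
  revert x y p q; decide

-- The linear map sending the basis vectors (the points `0`, `1`, `3`) to `x`, `y`, `k`.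
def frame (x y k : Fin 7) : Fin 7 → Fin 7 :=
  ![x, y, third x y, k, third x k, third y k, third (third x y) k]

theorem frame_injective {x y k : Fin 7} (h : Noncollinear x y k) : (frame x y k).Injective := by
  revert x y k; decide

theorem third_frame {x y k : Fin 7} (h : Noncollinear x y k) {a b : Fin 7} (hab : a ≠ b) :
    third (frame x y k a) (frame x y k b) = frame x y k (third a b) := by
  revert x y k a b; decide

theorem IsLine.frame {x y k a b c : Fin 7} (h : Noncollinear x y k) (hl : IsLine a b c) :
    IsLine (frame x y k a) (frame x y k b) (frame x y k c) :=
  ⟨(frame_injective h).ne hl.1, hl.2 ▸ third_frame h hl.1⟩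

end Fano

open Fano

section Labelling

variable {α : Type*} [DecidableEq α]

def IsFanoLabelling (t : Fin 7 → Finset α) : Prop :=
  ∀ a b c, IsLine a b c → t a ∩ t b ∩ t c = ∅

namespace IsFanoLabelling

variable {t : Fin 7 → Finset α}

theorem disjoint_of_eq (ht : IsFanoLabelling t) {a b c : Fin 7} (hl : IsLine a b c)
    (h : t a = t b) : Disjoint (t a) (t c) := by
  have := ht a b c hl
  rwa [← h, Finset.inter_self, ← Finset.disjoint_iff_inter_eq_empty] at this

theorem mono {s : Fin 7 → Finset α} (ht : IsFanoLabelling t) (h : ∀ p, s p ⊆ t p) :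
    IsFanoLabelling s := fun a b c hl =>
  Finset.subset_empty.1 <| ht a b c hl ▸ Finset.inter_subset_inter
    (Finset.inter_subset_inter (h a) (h b)) (h c)

theorem comp_frame (ht : IsFanoLabelling t) {x y k : Fin 7} (h : Noncollinear x y k) :
    IsFanoLabelling (t ∘ frame x y k) := fun _ _ _ hl => ht _ _ _ (hl.frame h)

end IsFanoLabelling

def AtMostTwoEqual {ι β : Type*} (t : ι → β) : Prop :=
  ∀ a b c, t a = t b → t a = t c → a = b ∨ a = c ∨ b = c

namespace AtMostTwoEqual

variable {ι β : Type*} {t : ι → β}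

theorem ne (h : AtMostTwoEqual t) {a b c : ι} (hab : t a = t b) (habc : [a, b, c].Nodup) :
    t a ≠ t c := fun hac => by
  simp only [List.nodup_cons, List.mem_cons, List.not_mem_nil] at habc
  rcases h a b c hab hac with h | h | h <;> simp_all

theorem comp_injective {κ : Type*} (h : AtMostTwoEqual t) {f : κ → ι} (hf : f.Injective) :
    AtMostTwoEqual (t ∘ f) := fun a b c hab hac => by
  simpa only [hf.eq_iff] using h (f a) (f b) (f c) hab hac

end AtMostTwoEqual

end Labelling

section MinimalNonSimplex

variable {m : ℕ} {K : Set (Finset (Fin m))}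

theorem MinimalNonSimplex.ne_empty (hK : IsSimplicialComplex m K) {τ : Finset (Fin m)}
    (h : MinimalNonSimplex m K τ) : τ ≠ ∅ := by
  rintro rfl
  exact h.1 hK.1

theorem exists_minimalNonSimplex_subset {ω : Finset (Fin m)} (hω : ω ∉ K) :
    ∃ τ ⊆ ω, MinimalNonSimplex m K τ := by
  obtain ⟨τ, ⟨hτω, hτK⟩, hmin⟩ :=
    WellFounded.has_min wellFounded_lt {τ | τ ⊆ ω ∧ τ ∉ K} ⟨ω, subset_rfl, hω⟩
  refine ⟨τ, hτω, hτK, fun ρ hρ => ?_⟩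
  by_contra hρK
  exact hmin ρ ⟨hρ.subset.trans hτω, hρK⟩ hρ

end MinimalNonSimplex

section Configurations

variable {m : ℕ} {K : Set (Finset (Fin m))}

theorem condS3_of_pairwise_disjoint (hK : IsSimplicialComplex m K) {τ₁ τ₂ τ₃ : Finset (Fin m)}
    (h₁ : MinimalNonSimplex m K τ₁) (h₂ : MinimalNonSimplex m K τ₂)
    (h₃ : MinimalNonSimplex m K τ₃)
    (d₁₂ : Disjoint τ₁ τ₂) (d₁₃ : Disjoint τ₁ τ₃) (d₂₃ : Disjoint τ₂ τ₃) : CondS3 m K := by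
  have n₁₂ := d₁₂.ne (h₁.ne_empty hK)
  have n₁₃ := d₁₃.ne (h₁.ne_empty hK)
  have n₂₃ := d₂₃.ne (h₂.ne_empty hK)
  simp only [Finset.disjoint_iff_inter_eq_empty] at d₁₂ d₁₃ d₂₃
  exact Or.inr <| Or.inr <| Or.inr <| Or.inr
    ⟨τ₁, τ₂, τ₃, by simp [*], by simp [*], d₁₂, d₁₃, d₂₃⟩

theorem condS3_of_config4 (hK : IsSimplicialComplex m K) {τ₁ τ₂ τ₃ τ₄ : Finset (Fin m)}
    (h₁ : MinimalNonSimplex m K τ₁) (h₂ : MinimalNonSimplex m K τ₂)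
    (h₃ : MinimalNonSimplex m K τ₃) (h₄ : MinimalNonSimplex m K τ₄)
    (n₂₃ : τ₂ ≠ τ₃) (n₂₄ : τ₂ ≠ τ₄) (n₃₄ : τ₃ ≠ τ₄)
    (d₁₂ : Disjoint τ₁ τ₂) (d₁₃ : Disjoint τ₁ τ₃) (d₁₄ : Disjoint τ₁ τ₄)
    (h₂₃₄ : τ₂ ∩ τ₃ ∩ τ₄ = ∅) : CondS3 m K := by
  have n₁₂ := d₁₂.ne (h₁.ne_empty hK)
  have n₁₃ := d₁₃.ne (h₁.ne_empty hK)
  have n₁₄ := d₁₄.ne (h₁.ne_empty hK)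
  have d : τ₁ ∩ (τ₂ ∪ τ₃ ∪ τ₄) = ∅ :=
    Finset.disjoint_iff_inter_eq_empty.1 <|
      Finset.disjoint_union_right.2 ⟨Finset.disjoint_union_right.2 ⟨d₁₂, d₁₃⟩, d₁₄⟩
  exact Or.inr <| Or.inr <| Or.inr <| Or.inl
    ⟨τ₁, τ₂, τ₃, τ₄, by simp [*], by simp [*], d, h₂₃₄⟩

theorem condS3_of_config3 (hK : IsSimplicialComplex m K) {τ₁ τ₂ τ₃ τ₄ τ₅ : Finset (Fin m)}
    (h₁ : MinimalNonSimplex m K τ₁) (h₂ : MinimalNonSimplex m K τ₂)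
    (h₃ : MinimalNonSimplex m K τ₃) (h₄ : MinimalNonSimplex m K τ₄)
    (h₅ : MinimalNonSimplex m K τ₅)
    (n₁₃ : τ₁ ≠ τ₃) (n₁₄ : τ₁ ≠ τ₄) (n₂₃ : τ₂ ≠ τ₃) (n₂₄ : τ₂ ≠ τ₄) (n₂₅ : τ₂ ≠ τ₅)
    (n₃₄ : τ₃ ≠ τ₄) (n₃₅ : τ₃ ≠ τ₅) (n₄₅ : τ₄ ≠ τ₅)
    (d₁₂ : Disjoint τ₁ τ₂) (d₁₅ : Disjoint τ₁ τ₅)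
    (h₁₃₄ : τ₁ ∩ τ₃ ∩ τ₄ = ∅) (h₂₃₅ : τ₂ ∩ τ₃ ∩ τ₅ = ∅) (h₂₄₅ : τ₂ ∩ τ₄ ∩ τ₅ = ∅) :
    CondS3 m K := by
  have n₁₂ := d₁₂.ne (h₁.ne_empty hK)
  have n₁₅ := d₁₅.ne (h₁.ne_empty hK)
  simp only [Finset.disjoint_iff_inter_eq_empty] at d₁₂ d₁₅
  exact Or.inr <| Or.inr <| Or.inl
    ⟨τ₁, τ₂, τ₃, τ₄, τ₅, by simp [*], by simp [*], d₁₂, d₁₅, h₁₃₄, h₂₃₅, h₂₄₅⟩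

/- The point `p` is labelled `τ (g p)`; every line must contain the indices of some clause
`c ∈ C`, a set of labels with empty intersection. -/
theorem exists_isFanoLabelling_of_pattern {n : ℕ} (τ : Fin n → Finset (Fin m))
    (hτ : ∀ i, τ i ∉ K) (g : Fin 7 → Fin n) (C : Finset (Finset (Fin n)))
    (hC : ∀ c ∈ C, c.inf τ = ∅) (hg : ∀ a b c, IsLine a b c → ∃ s ∈ C, s ⊆ {g a, g b, g c}) :
    ∃ t : Fin 7 → Finset (Fin m), (∀ p, t p ∉ K) ∧ IsFanoLabelling t := by
  refine ⟨τ ∘ g, fun _ => hτ _, fun a b c hl => ?_⟩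
  obtain ⟨s, hs, hsub⟩ := hg a b c hl
  have := Finset.inf_mono (f := τ) hsub
  rw [hC s hs] at this
  simpa [Finset.inf_insert, Finset.inter_assoc] using this

theorem exists_isFanoLabelling_of_condS3 (h : CondS3 m K) :
    ∃ t : Fin 7 → Finset (Fin m), (∀ p, t p ∉ K) ∧ IsFanoLabelling t := by
  rcases h with ⟨τ₁, τ₂, τ₃, τ₄, τ₅, τ₆, τ₇, hN, -, h₁₂₄, h₁₃₅, h₁₆₇, h₂₃₆, h₂₅₇, h₃₄₇, h₄₅₆⟩ |
    ⟨τ₁, τ₂, τ₃, τ₄, τ₅, τ₆, hN, -, h₁₃, h₁₂₄, h₁₂₅, h₁₄₆, h₁₅₆, h₂₃₆, h₃₄₅⟩ |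
    ⟨τ₁, τ₂, τ₃, τ₄, τ₅, hN, -, h₁₂, h₁₅, h₁₃₄, h₂₃₅, h₂₄₅⟩ |
    ⟨τ₁, τ₂, τ₃, τ₄, hN, -, h₁, h₂₃₄⟩ | ⟨τ₁, τ₂, τ₃, hN, -, h₁₂, h₁₃, h₂₃⟩
  · refine exists_isFanoLabelling_of_pattern ![τ₁, τ₂, τ₃, τ₄, τ₅, τ₆, τ₇] ?_
      ![2, 1, 5, 0, 4, 3, 6]
      {{0, 1, 3}, {0, 2, 4}, {0, 5, 6}, {1, 2, 5}, {1, 4, 6}, {2, 3, 6}, {3, 4, 5}} ?_ (by decide)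
    · intro i; fin_cases i <;> exact (hN _ (by simp)).1
    · simp [Finset.inf_insert, ← Finset.inter_assoc, *]
  · refine exists_isFanoLabelling_of_pattern ![τ₁, τ₂, τ₃, τ₄, τ₅, τ₆] ?_ ![1, 0, 4, 0, 3, 2, 5]
      {{0, 2}, {0, 1, 3}, {0, 1, 4}, {0, 3, 5}, {0, 4, 5}, {1, 2, 5}, {2, 3, 4}} ?_ (by decide)
    · intro i; fin_cases i <;> exact (hN _ (by simp)).1
    · simp [Finset.inf_insert, ← Finset.inter_assoc, *]
  · refine exists_isFanoLabelling_of_pattern ![τ₁, τ₂, τ₃, τ₄, τ₅] ?_ ![1, 0, 2, 0, 1, 4, 3]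
      {{0, 1}, {0, 4}, {0, 2, 3}, {1, 2, 4}, {1, 3, 4}} ?_ (by decide)
    · intro i; fin_cases i <;> exact (hN _ (by simp)).1
    · simp [Finset.inf_insert, ← Finset.inter_assoc, *]
  · simp only [Finset.inter_union_distrib_left, Finset.union_eq_empty] at h₁
    refine exists_isFanoLabelling_of_pattern ![τ₁, τ₂, τ₃, τ₄] ?_ ![0, 2, 0, 1, 0, 3, 0]
      {{0, 1}, {0, 2}, {0, 3}, {1, 2, 3}} ?_ (by decide)
    · intro i; fin_cases i <;> exact (hN _ (by simp)).1
    · simp [Finset.inf_insert, ← Finset.inter_assoc, *]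
  · refine exists_isFanoLabelling_of_pattern ![τ₁, τ₂, τ₃] ?_ ![2, 0, 2, 0, 2, 1, 2]
      {{0, 1}, {0, 2}, {1, 2}} ?_ (by decide)
    · intro i; fin_cases i <;> exact (hN _ (by simp)).1
    · simp [Finset.inf_insert, *]

end Configurations

/- Each lemma below treats one pattern of coincidences among the labels, moved by a collineation
to fixed points of the plane; the configuration of (S3) is then read off the seven lines. -/
section Classification

variable {m : ℕ} {K : Set (Finset (Fin m))} {t : Fin 7 → Finset (Fin m)}

theorem condS3_of_injective (hN : ∀ p, MinimalNonSimplex m K (t p)) (ht : IsFanoLabelling t)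
    (hinj : t.Injective) : CondS3 m K :=
  Or.inl ⟨t 3, t 1, t 0, t 5, t 4, t 2, t 6, by simp [hN],
    (by decide : [(3 : Fin 7), 1, 0, 5, 4, 2, 6].Nodup).map hinj,
    ht 3 1 5 (by decide), ht 3 0 4 (by decide), ht 3 2 6 (by decide), ht 1 0 2 (by decide),
    ht 1 4 6 (by decide), ht 0 5 6 (by decide), ht 5 4 2 (by decide)⟩

theorem condS3_of_one_pair (hN : ∀ p, MinimalNonSimplex m K (t p)) (ht : IsFanoLabelling t)
    (h01 : t 0 = t 1) (hinj : Set.InjOn t {1}ᶜ) : CondS3 m K := by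
  have h02 : t 0 ∩ t 2 = ∅ :=
    Finset.disjoint_iff_inter_eq_empty.1 (ht.disjoint_of_eq (by decide) h01)
  have hnodup : [t 0, t 3, t 2, t 4, t 5, t 6].Nodup :=
    List.Nodup.map_on (l := [0, 3, 2, 4, 5, 6])
      (fun a ha b hb => hinj (by revert a; decide) (by revert b; decide)) (by decide)
  refine Or.inr <| Or.inl ⟨t 0, t 3, t 2, t 4, t 5, t 6, by simp [hN], hnodup, h02,
    ht 0 3 4 (by decide), ?_, ?_, ht 0 5 6 (by decide), ht 3 2 6 (by decide),
    ht 2 4 5 (by decide)⟩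
  · rw [h01]; exact ht 1 3 5 (by decide)
  · rw [h01]; exact ht 1 4 6 (by decide)

theorem condS3_of_three_equal (hK : IsSimplicialComplex m K)
    (hN : ∀ p, MinimalNonSimplex m K (t p)) (ht : IsFanoLabelling t)
    (h01 : t 0 = t 1) (h03 : t 0 = t 3) : CondS3 m K := by
  have d02 : Disjoint (t 0) (t 2) := ht.disjoint_of_eq (by decide) h01
  have d04 : Disjoint (t 0) (t 4) := ht.disjoint_of_eq (by decide) h03
  have d05 : Disjoint (t 0) (t 5) := by
    rw [h01]; exact ht.disjoint_of_eq (by decide) (h01.symm.trans h03)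
  by_cases h24 : t 2 = t 4
  · exact condS3_of_pairwise_disjoint hK (hN 0) (hN 2) (hN 5) d02 d05
      (ht.disjoint_of_eq (by decide) h24)
  by_cases h25 : t 2 = t 5
  · exact condS3_of_pairwise_disjoint hK (hN 0) (hN 2) (hN 4) d02 d04
      (ht.disjoint_of_eq (by decide) h25)
  by_cases h45 : t 4 = t 5
  · exact condS3_of_pairwise_disjoint hK (hN 0) (hN 2) (hN 4) d02 d04
      (ht.disjoint_of_eq (by decide) h45).symm
  exact condS3_of_config4 hK (hN 0) (hN 2) (hN 4) (hN 5) h24 h25 h45 d02 d04 d05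
    (ht 2 4 5 (by decide))

theorem condS3_of_concurrent_pairs (hK : IsSimplicialComplex m K)
    (hN : ∀ p, MinimalNonSimplex m K (t p)) (ht : IsFanoLabelling t) (htwo : AtMostTwoEqual t)
    (h01 : t 0 = t 1) (h36 : t 3 = t 6) : CondS3 m K := by
  have d20 : Disjoint (t 2) (t 0) := (ht.disjoint_of_eq (by decide) h01).symm
  have d23 : Disjoint (t 2) (t 3) := (ht.disjoint_of_eq (by decide) h36).symm
  have n03 : t 0 ≠ t 3 := htwo.ne h01 (by decide)
  have n04 : t 0 ≠ t 4 := htwo.ne h01 (by decide)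
  have n05 : t 0 ≠ t 5 := htwo.ne h01 (by decide)
  have n34 : t 3 ≠ t 4 := htwo.ne h36 (by decide)
  have n35 : t 3 ≠ t 5 := htwo.ne h36 (by decide)
  have h053 : t 0 ∩ t 5 ∩ t 3 = ∅ := by rw [h36]; exact ht 0 5 6 (by decide)
  by_cases h45 : t 4 = t 5
  · exact condS3_of_config4 hK (hN 2) (hN 0) (hN 3) (hN 4) n03 n04 n34 d20 d23
      (ht.disjoint_of_eq (by decide) h45).symm (ht 0 3 4 (by decide))
  by_cases h24 : t 2 = t 4
  · exact condS3_of_config4 hK (hN 2) (hN 0) (hN 5) (hN 3) n05 n03 n35.symm d20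
      (ht.disjoint_of_eq (by decide) h24) d23 h053
  by_cases h25 : t 2 = t 5
  · exact condS3_of_config4 hK (hN 2) (hN 0) (hN 3) (hN 4) n03 n04 n34 d20 d23
      (ht.disjoint_of_eq (by decide) h25) (ht 0 3 4 (by decide))
  exact condS3_of_config3 hK (hN 2) (hN 0) (hN 4) (hN 5) (hN 3) h24 h25 n04 n05 n03 h45
    n34.symm n35.symm d20 d23 (ht 2 4 5 (by decide)) (ht 0 4 3 (by decide)) h053

theorem condS3_of_chained_pairs (hK : IsSimplicialComplex m K)
    (hN : ∀ p, MinimalNonSimplex m K (t p)) (ht : IsFanoLabelling t) (htwo : AtMostTwoEqual t)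
    (h01 : t 0 = t 1) (h23 : t 2 = t 3) : CondS3 m K := by
  have d02 : Disjoint (t 0) (t 2) := ht.disjoint_of_eq (by decide) h01
  have d26 : Disjoint (t 2) (t 6) := ht.disjoint_of_eq (by decide) h23
  have h046 : t 0 ∩ t 4 ∩ t 6 = ∅ := by rw [h01]; exact ht 1 4 6 (by decide)
  by_cases h46 : t 4 = t 6
  · have d04 : Disjoint (t 0) (t 4) := by
      rw [h01]; exact (ht.disjoint_of_eq (by decide) h46).symm
    exact condS3_of_pairwise_disjoint hK (hN 0) (hN 2) (hN 4) d02 d04 (h46 ▸ d26)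
  by_cases h56 : t 5 = t 6
  · exact condS3_of_pairwise_disjoint hK (hN 0) (hN 2) (hN 5) d02
      (ht.disjoint_of_eq (by decide) h56).symm (h56 ▸ d26)
  have n04 : t 0 ≠ t 4 := htwo.ne h01 (by decide)
  have n06 : t 0 ≠ t 6 := htwo.ne h01 (by decide)
  by_cases h45 : t 4 = t 5
  · exact condS3_of_config4 hK (hN 2) (hN 0) (hN 4) (hN 6) n04 n06 h46 d02.symm
      (ht.disjoint_of_eq (by decide) h45).symm d26 h046
  exact condS3_of_config3 hK (hN 2) (hN 0) (hN 4) (hN 5) (hN 6) (htwo.ne h23 (by decide))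
    (htwo.ne h23 (by decide)) n04 (htwo.ne h01 (by decide)) n06 h45 h46 h56 d02.symm d26
    (ht 2 4 5 (by decide)) h046 (ht 0 5 6 (by decide))

theorem condS3_of_two_pairs (hK : IsSimplicialComplex m K)
    (hN : ∀ p, MinimalNonSimplex m K (t p)) (ht : IsFanoLabelling t) (htwo : AtMostTwoEqual t)
    {x y p q : Fin 7} (hxy : x ≠ y) (hpq : p ≠ q) (hpx : p ≠ x) (hpy : p ≠ y) (hqx : q ≠ x)
    (hqy : q ≠ y) (hexy : t x = t y) (hepq : t p = t q) : CondS3 m K := by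
  have chained {a b c : Fin 7} (hn : Noncollinear a b c) (h01 : t a = t b)
      (h23 : t (third a b) = t c) : CondS3 m K :=
    condS3_of_chained_pairs hK (fun _ => hN _) (ht.comp_frame hn)
      (htwo.comp_injective (frame_injective hn)) h01 h23
  rcases lines_meet hxy hpq hpx hpy hqx hqy with h | h | h | h | h
  · have hn : Noncollinear x y p := ⟨hxy, hpx, hpy, by rw [h]; exact (third_ne_left hpq).symm⟩
    refine condS3_of_concurrent_pairs hK (fun _ => hN _) (ht.comp_frame hn)
      (htwo.comp_injective (frame_injective hn)) hexy ?_
    change t p = t (third (third x y) p)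
    rw [h, third_third_left hpq, hepq]
  · exact chained ⟨hxy, hqx, hqy, by rw [h]; exact hpq.symm⟩ hexy (by rw [h, hepq])
  · exact chained ⟨hxy, hpx, hpy, by rw [h]; exact hpq⟩ hexy (by rw [h, hepq])
  · exact chained ⟨hpq, hpy.symm, hqy.symm, by rw [h]; exact hxy.symm⟩ hepq (by rw [h, hexy])
  · exact chained ⟨hpq, hpx.symm, hqx.symm, by rw [h]; exact hxy⟩ hepq (by rw [h, hexy])

theorem condS3_of_isFanoLabelling (hK : IsSimplicialComplex m K)
    (hN : ∀ p, MinimalNonSimplex m K (t p)) (ht : IsFanoLabelling t) : CondS3 m K := by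
  by_cases htwo : AtMostTwoEqual t
  swap
  · obtain ⟨x, y, k, hexy, hexk, hxy, hxk, hyk⟩ :
        ∃ x y k, t x = t y ∧ t x = t k ∧ x ≠ y ∧ x ≠ k ∧ y ≠ k := by
      simpa [AtMostTwoEqual] using htwo
    have hk : k ≠ third x y := by
      rintro rfl
      have := ht x y _ ⟨hxy, rfl⟩
      rw [← hexy, ← hexk, Finset.inter_self, Finset.inter_self] at this
      exact (hN x).ne_empty hK this
    have hn : Noncollinear x y k := ⟨hxy, hxk.symm, hyk.symm, hk⟩
    exact condS3_of_three_equal hK (fun _ => hN _) (ht.comp_frame hn) hexy hexk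
  by_cases hinj : t.Injective
  · exact condS3_of_injective hN ht hinj
  obtain ⟨x, y, hexy, hxy⟩ : ∃ x y, t x = t y ∧ x ≠ y := by
    simpa [Function.Injective] using hinj
  by_cases hpair : ∃ p q, t p = t q ∧ p ≠ q ∧ t p ≠ t x
  · obtain ⟨p, q, hepq, hpq, hpx⟩ := hpair
    exact condS3_of_two_pairs hK hN ht htwo hxy hpq (by rintro rfl; exact hpx rfl)
      (by rintro rfl; exact hpx hexy.symm) (by rintro rfl; exact hpx hepq)
      (by rintro rfl; exact hpx (hepq.trans hexy.symm)) hexy hepq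
  push Not at hpair
  obtain ⟨k, hn⟩ := exists_noncollinear hxy
  have hf := frame_injective hn
  have eq_zero_of_eq {c : Fin 7} (hc : c ≠ 1) (hcx : t (frame x y k c) = t x) : c = 0 := by
    rcases htwo x y (frame x y k c) hexy hcx.symm with h | h | h
    · exact absurd h hxy
    · exact hf h.symm
    · exact absurd (hf h.symm) hc
  refine condS3_of_one_pair (fun _ => hN _) (ht.comp_frame hn) hexy fun a ha b hb hab => ?_
  by_contra hne
  exact hne <| (eq_zero_of_eq ha (hpair _ _ hab (hf.ne hne))).trans
    (eq_zero_of_eq hb (hpair _ _ hab.symm (hf.ne (Ne.symm hne)))).symm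

end Classification

section LinearAlgebra

variable {m : ℕ} {K : Set (Finset (Fin m))}

def oddRows (S : Matrix (Fin m) (Fin 3) ℤ) (p : Fin 7) : Finset (Fin m) :=
  {i | vec p ⬝ᵥ (fun j => (S i j : ZMod 2)) = 1}

theorem oddRows_notMem {S : Matrix (Fin m) (Fin 3) ℤ} (hS : CondA m 3 K S) (p : Fin 7) :
    oddRows S p ∉ K := by
  intro hp
  let φ : (Fin 3 → ℤ) →ₗ[ℤ] ZMod 2 :=
    ((dotProductEquiv (ZMod 2) (Fin 3) (vec p)).toAddMonoidHom.comp
      ((Int.castRingHom (ZMod 2)).compLeft (Fin 3)).toAddMonoidHom).toIntLinearMap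
  have hφ (w : Fin 3 → ℤ) : φ w = vec p ⬝ᵥ fun j => (w j : ZMod 2) := rfl
  have hφ0 : φ = 0 := LinearMap.ext_on (hS _ hp) <| by
    rintro _ ⟨i, hi, rfl⟩
    simp only [oddRows, Finset.mem_filter, Finset.mem_univ, true_and] at hi
    exact (hφ _).trans ((by decide : ∀ z : ZMod 2, z ≠ 1 → z = 0) _ hi)
  obtain ⟨q, hq⟩ := exists_vec_dotProduct_eq_one p
  have := LinearMap.congr_fun hφ0 (intVec q)
  rw [hφ] at this
  exact one_ne_zero (hq.symm.trans this)

theorem isFanoLabelling_oddRows (S : Matrix (Fin m) (Fin 3) ℤ) :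
    IsFanoLabelling (oddRows S) := by
  intro a b c hl
  ext i
  simp only [oddRows, Finset.mem_inter, Finset.mem_filter, Finset.mem_univ, true_and,
    Finset.notMem_empty, iff_false, not_and]
  rintro ⟨ha, hb⟩ hc
  rw [← hl.vec_add, add_dotProduct, ha, hb] at hc
  exact absurd hc (by decide)

theorem exists_isFanoLabelling_of_condA {S : Matrix (Fin m) (Fin 3) ℤ} (hS : CondA m 3 K S) :
    ∃ t : Fin 7 → Finset (Fin m), (∀ p, MinimalNonSimplex m K (t p)) ∧ IsFanoLabelling t := by
  choose t ht hN using fun p => exists_minimalNonSimplex_subset (oddRows_notMem hS p)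
  exact ⟨t, hN, (isFanoLabelling_oddRows S).mono ht⟩

theorem span_eq_top_of_isUnit_det {n R : Type*} [Fintype n] [DecidableEq n] [CommRing R]
    {M : Matrix n n R} (hM : IsUnit M.det) {W : Set (n → R)} (hW : ∀ j, M j ∈ W) :
    Submodule.span R W = ⊤ := by
  have : Submodule.span R (Set.range M.row) = ⊤ := by
    rw [← range_vecMulLinear, LinearMap.range_eq_top]
    exact Matrix.vecMul_surjective_iff_isUnit.2 ((Matrix.isUnit_iff_isUnit_det M).2 hM)
  exact eq_top_mono (Submodule.span_mono (Set.range_subset_iff.2 hW)) this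

theorem exists_condA_of_isFanoLabelling (hK : IsSimplicialComplex m K)
    {t : Fin 7 → Finset (Fin m)} (hnK : ∀ p, t p ∉ K) (ht : IsFanoLabelling t) :
    ∃ S : Matrix (Fin m) (Fin 3) ℤ, CondA m 3 K S := by
  have hfree (i : Fin m) : ∃ d, ∀ p, i ∈ t p → vec p ⬝ᵥ vec d = 1 := by
    obtain ⟨d, hd⟩ := exists_forall_vec_dotProduct_eq_one {p | i ∈ t p} <| by
      simp only [Finset.mem_filter, Finset.mem_univ, true_and]
      intro a ha b hb c hc hl
      simpa [ht a b c hl] using Finset.mem_inter.2 ⟨Finset.mem_inter.2 ⟨ha, hb⟩, hc⟩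
    exact ⟨d, fun p hp => hd p (by simpa using hp)⟩
  choose d hd using hfree
  let S : Matrix (Fin m) (Fin 3) ℤ := Matrix.of fun i => intVec (d i)
  refine ⟨S, fun σ hσ => ?_⟩
  let D := ({i | i ∉ σ} : Finset (Fin m)).image d
  have hrow : ∀ e ∈ D, intVec e ∈ (fun i => S i) '' {i | i ∉ σ} := by
    intro e he
    obtain ⟨i, hi, rfl⟩ := Finset.mem_image.1 he
    exact ⟨i, by simpa using hi, rfl⟩
  obtain ⟨a, ha, b, hb, c, hc, habc⟩ :=
    exists_noncollinear_of_forall_exists_dotProduct_eq_one D fun p => by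
      obtain ⟨i, hip, hiσ⟩ := Finset.not_subset.1 fun h => hnK p (hK.2 σ hσ _ h)
      exact ⟨d i, Finset.mem_image_of_mem d (by simpa using hiσ), hd i p hip⟩
  refine span_eq_top_of_isUnit_det (isUnit_det_intVec habc) fun j => ?_
  fin_cases j
  exacts [hrow a ha, hrow b hb, hrow c hc]

end LinearAlgebra

/-- `s(K) ≥ 3` iff condition (S3) holds. -/
theorem stmt_15 (m : ℕ) (K : Set (Finset (Fin m))) (hK : IsSimplicialComplex m K) :
    (∃ S : Matrix (Fin m) (Fin 3) ℤ, CondA m 3 K S) ↔ CondS3 m K := by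
  constructor
  · rintro ⟨S, hS⟩
    obtain ⟨t, hN, ht⟩ := exists_isFanoLabelling_of_condA hS
    exact condS3_of_isFanoLabelling hK hN ht
  · intro h
    obtain ⟨t, hnK, ht⟩ := exists_isFanoLabelling_of_condS3 h
    exact exists_condA_of_isFanoLabelling hK hnK ht
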